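/- arXiv:1802.04183 — 2 statements merged into one kernel-verified Lean document; each statement's English description precedes it below -/
import Mathlib

section
/- Let G be a K-IC structure with inner vertex set V_I which contains no cycle consisting only of non-inner vertices. Then for every inner vertex i and every vertex j ∈ V(G) \ V(T_i), the quantity b_{i,j} = |{v ∈ V_NI(i) : j ∈ N^+_G(v)}| equals 0; that is, no non-inner vertex of the rooted tree T_i has an edge in G to a vertex outside T_i. (Theorem 2, Part 2) -/
namespace ICPaper

variable {V : Type*}

/-- A directed cycle: a nonempty list of distinct vertices, consecutive vertices joined by
edges, and an edge from the last vertex back to the first (positive length). -/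
def IsCycle (E : V → V → Prop) (l : List V) : Prop :=
  l ≠ [] ∧ l.Nodup ∧ l.Chain' E ∧
    ∃ a b, l.getLast? = some a ∧ l.head? = some b ∧ E a b

/-- A directed path from `a` to `b`: consecutive vertices joined by edges, distinct vertices. -/
def IsPathList (E : V → V → Prop) (a b : V) (l : List V) : Prop :=
  l.Chain' E ∧ l.head? = some a ∧ l.getLast? = some b ∧ l.Nodup

/-- An I-path: a directed path from an inner vertex `a` to a different inner vertex `b`
all of whose intermediate vertices are non-inner. -/
def IsIPath (E : V → V → Prop) (VI : Set V) (a b : V) (l : List V) : Prop :=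
  a ∈ VI ∧ b ∈ VI ∧ a ≠ b ∧ IsPathList E a b l ∧
    ∀ v ∈ l, v ≠ a → v ≠ b → v ∉ VI

/-- `G = (V, E)` is a `K`-IC structure with inner vertex set `VI`:
(0) `|VI| = K`; (1) no cycle contains exactly one inner vertex (no I-cycle);
(2) between any ordered pair of distinct inner vertices there is exactly one I-path;
(3) every vertex and every edge lies on one of these I-paths. -/
def IsICStructure (E : V → V → Prop) (VI : Set V) (K : ℕ) : Prop :=
  VI.ncard = K ∧
  (¬ ∃ l, IsCycle E l ∧ (∃! v, v ∈ l ∧ v ∈ VI)) ∧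
  (∀ a ∈ VI, ∀ b ∈ VI, a ≠ b → ∃! l, IsIPath E VI a b l) ∧
  (∀ v : V, ∃ a b l, IsIPath E VI a b l ∧ v ∈ l) ∧
  (∀ u w : V, E u w → ∃ a b l, IsIPath E VI a b l ∧ [u, w] <:+: l)

/-- Vertex set of the rooted tree `T i`: the union of the I-paths starting at `i`. -/
def treeVerts (E : V → V → Prop) (VI : Set V) (i : V) : Set V :=
  {v | ∃ b l, IsIPath E VI i b l ∧ v ∈ l}

/-- `(u, w)` is an edge of the rooted tree `T i`. -/
def treeEdge (E : V → V → Prop) (VI : Set V) (i u w : V) : Prop :=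
  ∃ b l, IsIPath E VI i b l ∧ [u, w] <:+: l

/-- `V_NI(i)`: the non-inner vertices of the rooted tree `T i`. -/
def VNI (E : V → V → Prop) (VI : Set V) (i : V) : Set V :=
  treeVerts E VI i \ VI

/-- `N^+_{T i}(i)`: the out-neighbourhood of `i` in the rooted tree `T i`. -/
def NplusT (E : V → V → Prop) (VI : Set V) (i : V) : Set V :=
  {w | treeEdge E VI i i w}

/-- `N^+_G(v)`: the out-neighbourhood of `v` in `G`. -/
def NplusG (E : V → V → Prop) (v : V) : Set V := {w | E v w}

/-- The quantity `|{v ∈ V_NI(i) : j ∈ N^+_G(v)}|`; this is `a_{i,j}` when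
`j ∈ V_NI(i) \ N^+_{T i}(i)` and `b_{i,j}` when `j ∉ V(T i)`. -/
noncomputable def coeffCount (E : V → V → Prop) (VI : Set V) (i j : V) : ℕ :=
  {v | v ∈ VNI E VI i ∧ E v j}.ncard

/-- Condition c1: `a_{i,j}` is odd for every inner vertex `i` and every
`j ∈ V_NI(i) \ N^+_{T i}(i)`. -/
def CondC1 (E : V → V → Prop) (VI : Set V) : Prop :=
  ∀ i ∈ VI, ∀ j ∈ VNI E VI i, j ∉ NplusT E VI i → Odd (coeffCount E VI i j)

/-- Condition c2: `b_{i,j} = 0` for every inner vertex `i` and every `j ∉ V(T i)`. -/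
def CondC2 (E : V → V → Prop) (VI : Set V) : Prop :=
  ∀ i ∈ VI, ∀ j, j ∉ treeVerts E VI i → coeffCount E VI i j = 0

/-- Construction 1, symbol `W_I = ⊕_{k ∈ V_I} x_k`. -/
noncomputable def WI {F : Type*} [AddCommMonoid F] (VI : Set V) (x : V → F) : F :=
  ∑ᶠ k ∈ VI, x k

/-- Construction 1, symbol `W_j = x_j ⊕ (⊕_{q ∈ N^+_G(j)} x_q)`. -/
noncomputable def Wsym {F : Type*} [AddCommMonoid F] (E : V → V → Prop) (x : V → F)
    (j : V) : F :=
  x j + ∑ᶠ q ∈ NplusG E j, x q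

/-- Algorithm 1, the combination `Z_i = W_I ⊕ (⊕_{j ∈ V_NI(i)} W_j)`. -/
noncomputable def Z {F : Type*} [AddCommMonoid F] (E : V → V → Prop) (VI : Set V)
    (x : V → F) (i : V) : F :=
  WI VI x + ∑ᶠ j ∈ VNI E VI i, Wsym E x j

end ICPaper

open ICPaper

/-!
Let `v` be a non-inner vertex of `T i` with an edge `v → j`. Walk along the I-path of `T i` from
`i` to `v`, take the edge `v → j`, and continue along an I-path through that edge to its end `b`.
All vertices strictly between `i` and `b` on this walk are non-inner. A repeated one would close
a cycle of non-inner vertices, and `i = b` would close an I-cycle; so the walk is an I-path from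
`i` through `j`, and `j` lies in `T i`.
-/

namespace ICPaper

variable {V : Type*} {E : V → V → Prop} {VI : Set V}

theorem isCycle_cons_of_isChain {a : V} {l : List V} (hc : (a :: l ++ [a]).IsChain E)
    (hnd : (a :: l).Nodup) : IsCycle E (a :: l) := by
  obtain ⟨hcl, -, hclose⟩ := List.isChain_append.1 hc
  refine ⟨List.cons_ne_nil a l, hnd, hcl, (a :: l).getLast (List.cons_ne_nil a l), a,
    List.getLast?_eq_some_getLast _, rfl, hclose _ ?_ a rfl⟩
  exact List.getLast?_eq_some_getLast _

theorem exists_isCycle_subset_of_not_nodup :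
    ∀ {l : List V}, l.IsChain E → ¬ l.Nodup → ∃ C, IsCycle E C ∧ C ⊆ l
  | [], _, hnd => absurd List.nodup_nil hnd
  | a :: t, hc, hnd => by
    by_cases ht : t.Nodup
    · have hat : a ∈ t := by simpa [List.nodup_cons, ht] using hnd
      obtain ⟨t₁, t₂, rfl⟩ := List.append_of_mem hat
      refine ⟨a :: t₁, isCycle_cons_of_isChain (hc.prefix ⟨t₂, by simp⟩) ?_, ?_⟩
      · exact List.nodup_cons.2 ⟨fun h => (List.nodup_append.1 ht).2.2 a h a (by simp) rfl,
          (List.nodup_append.1 ht).1⟩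
      · exact List.cons_subset_cons a (List.subset_append_left _ _)
    · obtain ⟨C, hC, hCt⟩ := exists_isCycle_subset_of_not_nodup hc.tail ht
      exact ⟨C, hC, fun x hx => List.mem_cons_of_mem a (hCt hx)⟩

theorem isChain_splice {l₁ l₂ l₃ l₄ : List V} {v : V} (h₁ : (l₁ ++ v :: l₂).IsChain E)
    (h₂ : (l₃ ++ v :: l₄).IsChain E) : (l₁ ++ v :: l₄).IsChain E := by
  have := (h₁.prefix ⟨l₂, by simp⟩ : (l₁ ++ [v]).IsChain E).append_overlap
    (h₂.suffix ⟨l₃, rfl⟩ : ([v] ++ l₄).IsChain E) (List.cons_ne_nil v [])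
  simpa using this

theorem exists_eq_append_cons_of_infix {l : List V} {v j b : V} (h : [v, j] <:+: l ++ [b]) :
    ∃ s r, l = s ++ v :: r ∧ j ∈ r ++ [b] := by
  obtain ⟨s, t, hst⟩ := h
  obtain ⟨r, y, hr⟩ : ∃ r y, j :: t = r ++ [y] := by
    rcases List.eq_nil_or_concat (j :: t) with h | ⟨r, y, h⟩
    · exact absurd h (List.cons_ne_nil j t)
    · exact ⟨r, y, by simpa using h⟩
  have hsplit : (s ++ v :: r) ++ [y] = l ++ [b] := by
    rw [← hst]; simp [← hr]
  obtain ⟨hl, hy⟩ := List.append_inj' hsplit rfl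
  refine ⟨s, r, hl.symm, ?_⟩
  rw [← List.singleton_inj.1 hy, ← hr]
  exact List.mem_cons_self

theorem IsIPath.exists_eq_cons_append {a b : V} {l : List V} (h : IsIPath E VI a b l) :
    ∃ m, l = a :: (m ++ [b]) ∧ ∀ x ∈ m, x ∉ VI := by
  obtain ⟨-, -, hab, ⟨-, hhead, hlast, hnd⟩, hint⟩ := h
  obtain ⟨t, rfl⟩ := List.head?_eq_some_iff.1 hhead
  rcases List.eq_nil_or_concat t with rfl | ⟨m, y, rfl⟩
  · exact absurd (by simpa using hlast) hab
  simp only [List.concat_eq_append] at hlast hnd hint ⊢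
  rw [← List.cons_append, List.getLast?_concat, Option.some_inj] at hlast
  subst hlast
  obtain ⟨ham, hmy⟩ := List.nodup_cons.1 hnd
  refine ⟨m, rfl, fun x hx => hint x (by simp [hx]) ?_ ?_⟩
  · rintro rfl; exact ham (List.mem_append_left _ hx)
  · rintro rfl; exact (List.nodup_append.1 hmy).2.2 x hx x (List.mem_singleton_self x) rfl

theorem isIPath_of_isChain (hI : ¬ ∃ l, IsCycle E l ∧ ∃! v, v ∈ l ∧ v ∈ VI)
    (hNC : ¬ ∃ l, IsCycle E l ∧ ∀ v ∈ l, v ∉ VI) {a b : V} {m : List V} (ha : a ∈ VI)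
    (hb : b ∈ VI) (hm : ∀ x ∈ m, x ∉ VI) (hc : (a :: (m ++ [b])).IsChain E) :
    IsIPath E VI a b (a :: (m ++ [b])) := by
  have hnd : m.Nodup := by
    by_contra hnd
    obtain ⟨C, hC, hCm⟩ := exists_isCycle_subset_of_not_nodup hc.tail.left_of_append hnd
    exact hNC ⟨C, hC, fun x hx => hm x (hCm hx)⟩
  have ham : a ∉ m := fun h => hm a h ha
  have hab : a ≠ b := by
    rintro rfl
    refine hI ⟨a :: m, isCycle_cons_of_isChain hc (List.nodup_cons.2 ⟨ham, hnd⟩), a,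
      ⟨List.mem_cons_self, ha⟩, ?_⟩
    rintro x ⟨hx, hxI⟩
    rcases List.mem_cons.1 hx with rfl | hx
    · rfl
    · exact absurd hxI (hm x hx)
  have hfull : (a :: (m ++ [b])).Nodup := by
    refine List.nodup_cons.2 ⟨by simp [ham, hab], List.nodup_append.2
      ⟨hnd, List.nodup_singleton b, fun x hx y hy => ?_⟩⟩
    rw [List.mem_singleton.1 hy]
    rintro rfl
    exact hm x hx hb
  refine ⟨ha, hb, hab, ⟨hc, rfl, by rw [← List.cons_append, List.getLast?_concat], hfull⟩,
    fun x hx hxa hxb => ?_⟩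
  simp only [List.mem_cons, List.mem_append, List.not_mem_nil, or_false] at hx
  rcases hx with rfl | hx | rfl
  exacts [absurd rfl hxa, hm x hx, absurd rfl hxb]

theorem mem_treeVerts_of_mem_VNI (hI : ¬ ∃ l, IsCycle E l ∧ ∃! v, v ∈ l ∧ v ∈ VI)
    (hNC : ¬ ∃ l, IsCycle E l ∧ ∀ v ∈ l, v ∉ VI)
    (hcover : ∀ u w : V, E u w → ∃ a b l, IsIPath E VI a b l ∧ [u, w] <:+: l)
    {i v j : V} (hv : v ∈ VNI E VI i) (hvj : E v j) : j ∈ treeVerts E VI i := by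
  obtain ⟨⟨b, P, hP, hvP⟩, hvI⟩ := hv
  obtain ⟨m, rfl, hm⟩ := hP.exists_eq_cons_append
  obtain ⟨hi, hb, -, hPpath, -⟩ := hP
  obtain ⟨a, b', Q, hQ, hvjQ⟩ := hcover v j hvj
  obtain ⟨n, rfl, hn⟩ := hQ.exists_eq_cons_append
  obtain ⟨ha, hb', -, hQpath, -⟩ := hQ
  have hvm : v ∈ m := by
    simp only [List.mem_cons, List.mem_append, List.not_mem_nil, or_false] at hvP
    rcases hvP with rfl | hvm | rfl
    exacts [absurd hi hvI, hvm, absurd hb hvI]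
  obtain ⟨m₁, m₂, rfl⟩ := List.append_of_mem hvm
  have hvjn : [v, j] <:+: n ++ [b'] := by
    rcases List.infix_cons_iff.1 hvjQ with h | h
    · exact absurd ((List.cons_prefix_cons.1 h).1 ▸ ha) hvI
    · exact h
  obtain ⟨s, r, rfl, hjr⟩ := exists_eq_append_cons_of_infix hvjn
  have hW : (i :: ((m₁ ++ v :: r) ++ [b'])).IsChain E := by
    have h₁ : (i :: m₁ ++ v :: (m₂ ++ [b])).IsChain E := by
      have := hPpath.1
      rwa [List.append_assoc, List.cons_append] at this
    have h₂ : (a :: s ++ v :: (r ++ [b'])).IsChain E := by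
      have := hQpath.1
      rwa [List.append_assoc, List.cons_append] at this
    rw [List.append_assoc, List.cons_append]
    exact isChain_splice h₁ h₂
  refine ⟨b', _, isIPath_of_isChain hI hNC hi hb' (fun x hx => ?_) hW, ?_⟩
  · simp only [List.mem_append, List.mem_cons] at hx
    rcases hx with hx | rfl | hx
    exacts [hm x (by simp [hx]), hvI, hn x (by simp [hx])]
  · simp only [List.mem_append, List.mem_singleton] at hjr
    simp [hjr]

end ICPaper

theorem theorem2_part2_general {V : Type*}
    (E : V → V → Prop) (VI : Set V) (K : ℕ) (hIC : IsICStructure E VI K)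
    (hNC : ¬ ∃ l, IsCycle E l ∧ ∀ v ∈ l, v ∉ VI) :
    ∀ i ∈ VI, ∀ j, j ∉ treeVerts E VI i → coeffCount E VI i j = 0 := by
  intro i _ j hj
  have hempty : {v | v ∈ VNI E VI i ∧ E v j} = ∅ :=
    Set.eq_empty_of_forall_notMem fun v ⟨hv, hvj⟩ =>
      hj (mem_treeVerts_of_mem_VNI hIC.2.1 hNC hIC.2.2.2.2 hv hvj)
  rw [coeffCount, hempty, Set.ncard_empty]

/-- **Theorem 2, Part 2.** In a `K`-IC structure with no cycle consisting only of non-inner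
vertices, for every inner vertex `i` and every vertex `j` outside the rooted tree `T i`,
the quantity `b_{i,j}` equals `0`. -/
theorem theorem2_part2 {V : Type*} [Fintype V] [DecidableEq V]
    (E : V → V → Prop) (VI : Set V) (K : ℕ) (hIC : IsICStructure E VI K)
    (hNC : ¬ ∃ l, IsCycle E l ∧ ∀ v ∈ l, v ∉ VI) :
    ∀ i ∈ VI, ∀ j, j ∉ treeVerts E VI i → coeffCount E VI i j = 0 :=
  theorem2_part2_general E VI K hIC hNC
end

section
/- Let G be a K-IC structure with inner vertex set V_I and let i and k be distinct inner vertices. Then the number of non-inner vertices v ∈ V_NI(i) of the rooted tree T_i with an edge (v, k) ∈ E equals 0 if k ∈ N^+_{T_i}(i) (the unique I-path from i to k is the single edge i → k) and equals 1 otherwise (the unique such v is the immediate predecessor of k on the unique I-path from i to k). Consequently, in Z_i = W_I ⊕ (⊕_{j ∈ V_NI(i)} W_j) over a field of characteristic 2, the message x_k of every inner vertex k ∉ {i} ∪ N^+_{T_i}(i) appears exactly twice and is cancelled. (Intermediate claim in the proof of Theorem 1) -/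
/-! The unique I-path from `i` to `k` ends with an edge `u → k`. If `v ∈ V_NI(i)` has an edge
to `k`, cutting an I-path of `T_i` through `v` at `v` and appending `k` gives an I-path from `i`
to `k`, which by uniqueness is that path, so `v = u`. Hence the non-inner vertices of `T_i` with
an edge to `k` form `{u} \ V_I`, and `u` is inner exactly when `u = i`, i.e. when
`k ∈ N^+_{T_i}(i)`. Otherwise `x_k` occurs in `Z_i` once through `W_I` and once through `W_u`,
and the two occurrences cancel in characteristic `2`. -/

theorem finsum_mem_pi_single {α M : Type*} [DecidableEq α] [AddCommMonoid M] (s : Set α)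
    (a : α) (b : M) [Decidable (a ∈ s)] :
    ∑ᶠ j ∈ s, Pi.single a b j = if a ∈ s then b else 0 := by
  rw [finsum_eq_single _ a fun j hj => by simp [Pi.single_eq_of_ne hj], finsum_eq_if,
    Pi.single_eq_same]

theorem finsum_mem_boole {α M : Type*} [AddCommMonoidWithOne M] {s : Set α} {p : α → Prop}
    [DecidablePred p] (hs : {x | x ∈ s ∧ p x}.Finite) :
    ∑ᶠ x ∈ s, (if p x then 1 else 0 : M) = {x | x ∈ s ∧ p x}.ncard := by
  rw [← finsum_one, Nat.cast_finsum_mem hs, Nat.cast_one, finsum_mem_def, finsum_mem_def]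
  congr with x
  by_cases hx : x ∈ s <;> by_cases hpx : p x <;> simp [hx, hpx]

namespace ICPaper

variable {V : Type*} {E : V → V → Prop} {VI : Set V}

theorem IsIPath.exists_eq_append_pair {a b : V} {l : List V} (h : IsIPath E VI a b l) :
    ∃ p u, l = p ++ [u, b] := by
  obtain ⟨-, -, hab, ⟨-, hhead, hlast, -⟩, -⟩ := h
  obtain ⟨l', rfl⟩ := List.getLast?_eq_some_iff.mp hlast
  obtain rfl | ⟨p, u, rfl⟩ := l'.eq_nil_or_concat'
  · exact absurd (by simpa using hhead) (Ne.symm hab)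
  · exact ⟨p, u, by simp⟩

theorem IsIPath.eq_source_of_mem_inner {a b c : V} {p q : List V}
    (h : IsIPath E VI a b (p ++ c :: q)) (hq : q ≠ []) (hc : c ∈ VI) : c = a := by
  obtain ⟨-, -, -, ⟨-, -, hlast, hnodup⟩, hmid⟩ := h
  by_contra hca
  have hcb : c = b := by
    by_contra hcb
    exact hmid c (by simp) hca hcb hc
  subst hcb
  obtain ⟨x, q, rfl⟩ := List.exists_cons_of_ne_nil hq
  rw [List.getLast?_append_of_ne_nil _ (List.cons_ne_nil _ _), List.getLast?_cons_cons] at hlast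
  simp [List.nodup_append, List.mem_of_getLast? hlast] at hnodup

theorem IsIPath.mem_inner_iff_eq_source {a b u : V} {p : List V}
    (h : IsIPath E VI a b (p ++ [u, b])) : u ∈ VI ↔ u = a :=
  ⟨fun hu => h.eq_source_of_mem_inner (List.cons_ne_nil _ _) hu, fun hua => hua ▸ h.1⟩

theorem IsIPath.take_append_edge {i b v k : V} {p q : List V}
    (h : IsIPath E VI i b (p ++ v :: q)) (hv : v ∉ VI) (hvk : E v k) (hk : k ∈ VI)
    (hik : i ≠ k) : IsIPath E VI i k (p ++ [v, k]) := by
  have hp : ∀ w ∈ p, w ∈ VI → w = i := by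
    intro w hw hwVI
    obtain ⟨s, t, rfl⟩ := List.append_of_mem hw
    exact IsIPath.eq_source_of_mem_inner (p := s) (q := t ++ v :: q) (by simpa using h)
      (by simp) hwVI
  obtain ⟨hi, -, -, ⟨hchain, hhead, -, hnodup⟩, -⟩ := h
  have hpne : p ≠ [] := by
    rintro rfl
    simp only [List.nil_append, List.head?_cons, Option.some_inj] at hhead
    exact hv (hhead ▸ hi)
  have hprefix : p ++ [v] <+: p ++ v :: q := ⟨q, by simp⟩
  refine ⟨hi, hk, hik, ⟨?_, ?_, by simp, ?_⟩, ?_⟩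
  · exact List.isChain_append_cons_cons.mpr
      ⟨hchain.prefix hprefix, hvk, List.isChain_singleton _⟩
  · rwa [List.head?_append_of_ne_nil _ hpne] at hhead ⊢
  · have hkp : k ∉ p ++ [v] := by
      simpa [not_or] using ⟨fun hkp => hik (hp k hkp hk).symm, fun hkv => hv (hkv ▸ hk)⟩
    rw [show p ++ [v, k] = p ++ [v] ++ [k] by simp]
    exact (hnodup.sublist hprefix.sublist).append (List.nodup_singleton k)
      (List.disjoint_singleton.mpr hkp)
  · intro w hw hwi hwk hwVI
    simp only [List.mem_append, List.mem_cons, List.not_mem_nil, or_false] at hw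
    rcases hw with hw | rfl | rfl
    · exact hwi (hp w hw hwVI)
    · exact hv hwVI
    · exact hwk rfl

theorem isIPath_pair_of_mem_NplusT {i k : V} (hk : k ∈ VI) (h : k ∈ NplusT E VI i) :
    IsIPath E VI i k [i, k] := by
  obtain ⟨b, l, hl, s, t, rfl⟩ := h
  obtain ⟨-, -, -, ⟨-, hhead, hlast, hnodup⟩, -⟩ := id hl
  obtain rfl : s = [] := by
    cases s with
    | nil => rfl
    | cons x s =>
      simp only [List.cons_append, List.head?_cons, Option.some_inj] at hhead
      simp [hhead, List.nodup_append] at hnodup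
  have hik : i ≠ k := fun hik => by simp [hik] at hnodup
  obtain rfl : t = [] := by
    by_contra ht
    exact hik (IsIPath.eq_source_of_mem_inner (p := [i]) (by simpa using hl) ht hk).symm
  obtain rfl : k = b := by simpa using hlast
  exact hl

theorem setOf_mem_VNI_and_edge_eq {i k u : V} {p : List V}
    (hl : IsIPath E VI i k (p ++ [u, k])) (huniq : ∀ l, IsIPath E VI i k l → l = p ++ [u, k]) :
    {v | v ∈ VNI E VI i ∧ E v k} = {u} \ VI := by
  ext v
  constructor
  · rintro ⟨⟨⟨b, l, hlb, hvl⟩, hv⟩, hvk⟩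
    obtain ⟨s, t, rfl⟩ := List.append_of_mem hvl
    obtain ⟨-, hvu⟩ :=
      List.append_inj' (huniq _ (hlb.take_append_edge hv hvk hl.2.1 hl.2.2.1)) rfl
    simp only [List.cons.injEq, and_true] at hvu
    exact ⟨hvu, hv⟩
  · rintro ⟨rfl, hv⟩
    exact ⟨⟨⟨k, _, hl, by simp⟩, hv⟩,
      List.isChain_pair.mp (hl.2.2.2.1.1.suffix (List.suffix_append p [v, k]))⟩

theorem mem_NplusT_iff_mem_inner {i k u : V} {p : List V}
    (hl : IsIPath E VI i k (p ++ [u, k])) (huniq : ∀ l, IsIPath E VI i k l → l = p ++ [u, k]) :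
    k ∈ NplusT E VI i ↔ u ∈ VI := by
  rw [hl.mem_inner_iff_eq_source]
  constructor
  · intro h
    obtain ⟨-, hiu⟩ :=
      List.append_inj' (s₁ := []) (huniq _ (isIPath_pair_of_mem_NplusT hl.2.1 h)) rfl
    simpa [eq_comm] using hiu
  · rintro rfl
    exact ⟨k, _, hl, (List.suffix_append p [u, k]).isInfix⟩

theorem Z_pi_single_eq_one_add_ncard {F : Type*} [AddCommMonoidWithOne F] [DecidableEq V]
    {i k : V} (hk : k ∈ VI) (hfin : {v | v ∈ VNI E VI i ∧ E v k}.Finite) :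
    Z E VI (Pi.single k (1 : F)) i = 1 + {v | v ∈ VNI E VI i ∧ E v k}.ncard := by
  classical
  have hW : ∀ j ∈ VNI E VI i, Wsym E (Pi.single k (1 : F)) j = if E j k then 1 else 0 := by
    intro j hj
    have hjk : j ≠ k := fun hjk => hj.2 (hjk ▸ hk)
    rw [Wsym, finsum_mem_pi_single, Pi.single_eq_of_ne hjk, zero_add]
    rfl
  rw [Z, WI, finsum_mem_pi_single, if_pos hk, finsum_mem_congr rfl hW, finsum_mem_boole hfin]

end ICPaper

open ICPaper

theorem inner_message_cancelled_general {V : Type*} [DecidableEq V]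
    (F : Type*) [Field F] [CharP F 2]
    (E : V → V → Prop) (VI : Set V) (K : ℕ) (hIC : IsICStructure E VI K)
    (i k : V) (hi : i ∈ VI) (hk : k ∈ VI) (hik : i ≠ k) :
    ((k ∈ NplusT E VI i → {v | v ∈ VNI E VI i ∧ E v k}.ncard = 0) ∧
     (k ∉ NplusT E VI i → {v | v ∈ VNI E VI i ∧ E v k}.ncard = 1)) ∧
    (k ∉ NplusT E VI i → Z E VI (Pi.single k (1 : F)) i = 0) := by
  obtain ⟨l, hl, huniq⟩ := hIC.2.2.1 i hi k hk hik
  obtain ⟨p, u, rfl⟩ := hl.exists_eq_append_pair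
  have hset := setOf_mem_VNI_and_edge_eq hl huniq
  have hNplusT := mem_NplusT_iff_mem_inner hl huniq
  have hcount : k ∉ NplusT E VI i → {v | v ∈ VNI E VI i ∧ E v k}.ncard = 1 := fun h => by
    rw [hset, (Set.disjoint_singleton_left.mpr (mt hNplusT.mpr h)).sdiff_eq_left,
      Set.ncard_singleton]
  refine ⟨⟨fun h => ?_, hcount⟩, fun h => ?_⟩
  · rw [hset, Set.sdiff_eq_empty.mpr (Set.singleton_subset_iff.mpr (hNplusT.mp h)),
      Set.ncard_empty]
  · rw [Z_pi_single_eq_one_add_ncard hk (hset ▸ (Set.finite_singleton u).sdiff), hcount h,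
      Nat.cast_one, CharTwo.add_self_eq_zero]

/-- **Intermediate claim in the proof of Theorem 1.** For distinct inner vertices `i` and
`k`, the number of non-inner vertices `v ∈ V_NI(i)` with an edge `(v, k) ∈ E` equals `0`
if `k ∈ N^+_{T i}(i)` and equals `1` otherwise; consequently, over a field of
characteristic `2`, the message `x_k` of every inner vertex `k ∉ {i} ∪ N^+_{T i}(i)` is
cancelled in `Z_i` (its coefficient is `0`). -/
theorem inner_message_cancelled {V : Type*} [Fintype V] [DecidableEq V]
    (F : Type*) [Field F] [Fintype F] [CharP F 2]
    (E : V → V → Prop) (VI : Set V) (K : ℕ) (hIC : IsICStructure E VI K)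
    (i k : V) (hi : i ∈ VI) (hk : k ∈ VI) (hik : i ≠ k) :
    ((k ∈ NplusT E VI i → {v | v ∈ VNI E VI i ∧ E v k}.ncard = 0) ∧
     (k ∉ NplusT E VI i → {v | v ∈ VNI E VI i ∧ E v k}.ncard = 1)) ∧
    (k ∉ NplusT E VI i → Z E VI (Pi.single k (1 : F)) i = 0) :=
  inner_message_cancelled_general F E VI K hIC i k hi hk hik
end
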